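/- arXiv:2101.11690 — 2 statements merged into one kernel-verified Lean document; each statement's English description precedes it below -/
import Mathlib

section
/- Let n ≥ 1, θ ∈ (0,1/2). There exists a constant c = c(n,θ) > 0 such that for any pair of n-dimensional dyadic cubes K₁, K₂ ⊂ Q₁ with common sidelength 2^{−k} satisfying dist(K₁, K₂) < (3√n + 1)·2^{−k}, the diagonal ball 𝓑_r(z) with z = (x+y)/2 (x,y the centers of K₁,K₂) and r = (5√n + 1)·2^{−k} satisfies K₁ × K₂ ⊂ 𝓑_r(z) and μ(𝓑_r(z)) ≤ c (5√n + 1)^{2n} μ(K₁ × K₂). -/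
/-!
Write `s = n - 2θ` and `ν` for the measure with density `|x - y|^{-s}`. The homothety
`p ↦ (z, z) + r • p` of `ℝⁿ × ℝⁿ` multiplies Lebesgue measure by `r^{2n}` and the density by
`r^{-s}`, so `ν(B_r(z)²) = r^{n+2θ} ν(B_1(0)²)`; and `ν(B_1(0)²) < ∞` because `|u|^{-s}` is
integrable near `0` (`s < n`). The separation hypothesis puts both cubes in `B_{r/2}(z)`, so the
density is at least `r^{-s}` on `K₁ × K₂` (`s ≥ 0`) and `ν(K₁ × K₂) ≥ r^{-s} 2^{-2kn}`. As
`r^{2n} = (5√n + 1)^{2n} 2^{-2kn}`, the theorem holds with `c = ν(B_1(0)²)`.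
-/

open MeasureTheory Metric ENNReal

/-- The measure `μ` on `ℝⁿ × ℝⁿ` with density `|x - y|^{-(n - 2θ)}`. -/
noncomputable def muMeas (n : ℕ) (θ : ℝ) :
    Measure (EuclideanSpace ℝ (Fin n) × EuclideanSpace ℝ (Fin n)) :=
  volume.withDensity fun p => ENNReal.ofReal (dist p.1 p.2 ^ (-((n : ℝ) - 2 * θ)))

/-- The dyadic subcube of the unit cube `Q₁ = [0,1]ⁿ` of generation `k`
with lower corner `a/2^k`. -/
def dyadicCube (n k : ℕ) (a : Fin n → ℕ) : Set (EuclideanSpace ℝ (Fin n)) :=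
  {x | ∀ t : Fin n, (a t : ℝ) / 2 ^ k ≤ x t ∧ x t ≤ ((a t : ℝ) + 1) / 2 ^ k}

/-- The distance between two sets. -/
noncomputable def setDist {E : Type*} [PseudoMetricSpace E] (A B : Set E) : ℝ :=
  sInf {d | ∃ a ∈ A, ∃ b ∈ B, d = dist a b}

section DistPowMeasure

variable {E : Type*} [NormedAddCommGroup E] [NormedSpace ℝ E] [FiniteDimensional ℝ E]
  [MeasurableSpace E] [BorelSpace E] (μ : Measure E) [μ.IsAddHaarMeasure]

noncomputable def distPowMeasure (s : ℝ) : Measure (E × E) :=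
  (μ.prod μ).withDensity fun p => ENNReal.ofReal (dist p.1 p.2 ^ (-s))

theorem ae_fst_ne_snd [Nontrivial E] : ∀ᵐ p ∂μ.prod μ, p.1 ≠ p.2 := by
  have hdiag : {p : E × E | ¬p.1 ≠ p.2} =
      (fun p : E × E => (p.1 - p.2, p.2)) ⁻¹' ({0} ×ˢ Set.univ) := by
    ext p
    simp [sub_eq_zero]
  rw [ae_iff, hdiag, (measurePreserving_sub_prod μ μ).measure_preimage
    ((measurableSet_singleton 0).prod .univ).nullMeasurableSet, Measure.prod_prod,
    measure_singleton, zero_mul]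

theorem le_distPowMeasure_prod [Nontrivial E] {s r : ℝ} (hs : 0 ≤ s) {A B : Set E}
    (hAB : ∀ x ∈ A, ∀ y ∈ B, dist x y ≤ r) :
    ENNReal.ofReal (r ^ (-s)) * (μ A * μ B) ≤ distPowMeasure μ s (A ×ˢ B) := by
  rw [distPowMeasure, withDensity_apply', ← Measure.prod_prod, ← setLIntegral_const]
  -- On the diagonal the density is `0 ^ (-s) = 0`, but the diagonal is null.
  refine setLIntegral_mono_ae (by fun_prop) ?_
  filter_upwards [ae_fst_ne_snd μ] with p hp hpAB
  exact ENNReal.ofReal_le_ofReal <| Real.rpow_le_rpow_of_nonpos (dist_pos.2 hp)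
    (hAB _ hpAB.1 _ hpAB.2) (neg_nonpos.2 hs)

theorem prod_eq_smul_map_homothety (z : E) {r : ℝ} (hr : 0 < r) :
    μ.prod μ = ENNReal.ofReal (r ^ (2 * Module.finrank ℝ E)) •
      (μ.prod μ).map fun p => (z, z) + r • p := by
  have hsmul := Measure.map_addHaar_smul (μ.prod μ) hr.ne'
  rw [Module.finrank_prod, ← two_mul] at hsmul
  have hcomp : (fun p : E × E => (z, z) + r • p) = ((z, z) + ·) ∘ (r • ·) := rfl
  rw [hcomp, ← Measure.map_map (measurable_const_add _) (measurable_const_smul r), hsmul,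
    Measure.map_smul, map_add_left_eq_self, smul_smul, ← ENNReal.ofReal_mul (by positivity),
    abs_of_pos (by positivity), mul_inv_cancel₀ (by positivity), ENNReal.ofReal_one, one_smul]

theorem distPowMeasure_ball_prod (s : ℝ) (z : E) {r : ℝ} (hr : 0 < r) :
    distPowMeasure μ s (ball z r ×ˢ ball z r) =
      ENNReal.ofReal (r ^ (2 * Module.finrank ℝ E - s)) *
        distPowMeasure μ s (ball 0 1 ×ˢ ball 0 1) := by
  set T : E × E → E × E := fun p => (z, z) + r • p
  have hT : Measurable T := (measurable_const_smul r).const_add _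
  have hpre : T ⁻¹' (ball z r ×ˢ ball z r) = ball 0 1 ×ˢ ball 0 1 := by
    ext p
    simp [T, norm_smul, abs_of_pos hr, mul_lt_iff_lt_one_right hr]
  have hdensity : ∀ p : E × E, ENNReal.ofReal (dist (T p).1 (T p).2 ^ (-s)) =
      ENNReal.ofReal (r ^ (-s)) * ENNReal.ofReal (dist p.1 p.2 ^ (-s)) := by
    intro p
    simp [T, dist_smul₀, abs_of_pos hr, Real.mul_rpow hr.le dist_nonneg,
      ENNReal.ofReal_mul (Real.rpow_nonneg hr.le _)]
  have hmeas : Measurable fun p : E × E => ENNReal.ofReal (dist p.1 p.2 ^ (-s)) := by fun_prop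
  have hball : MeasurableSet (ball z r ×ˢ ball z r) := measurableSet_ball.prod measurableSet_ball
  rw [distPowMeasure, withDensity_apply _ hball,
    withDensity_apply _ (measurableSet_ball.prod measurableSet_ball)]
  conv_lhs => rw [prod_eq_smul_map_homothety μ z hr, Measure.restrict_smul,
    lintegral_smul_measure, setLIntegral_map hball hmeas hT, hpre]
  simp_rw [hdensity]
  rw [lintegral_const_mul _ hmeas, smul_eq_mul, ← mul_assoc,
    ← ENNReal.ofReal_mul (by positivity), ← Real.rpow_natCast, ← Real.rpow_add hr]
  push_cast
  ring_nf

theorem distPowMeasure_ball_prod_lt_top (hd : 1 ≤ Module.finrank ℝ E) {s : ℝ}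
    (hs : s < Module.finrank ℝ E) (z : E) (r : ℝ) :
    distPowMeasure μ s (ball z r ×ˢ ball z r) < ∞ := by
  set g : E → ℝ≥0∞ := fun u => ENNReal.ofReal (‖u‖ ^ (-s))
  have hg : Measurable g := by fun_prop
  have hg_fin : ∫⁻ u in ball 0 (2 * r), g u ∂μ < ∞ := by
    refine Integrable.lintegral_lt_top (integrableOn_ball_of_norm_le_rpow hd (C := 1) hs
      (ae_of_all _ fun u => ?_) (measurable_norm.pow_const _).aestronglyMeasurable)
    rw [one_mul, Real.norm_of_nonneg (by positivity)]
  have hsub : ball z r ×ˢ ball z r ⊆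
      (fun p : E × E => (p.1 - p.2, p.2)) ⁻¹' (ball 0 (2 * r) ×ˢ ball z r) := by
    rintro ⟨x, y⟩ ⟨hx, hy⟩
    refine ⟨?_, hy⟩
    rw [mem_ball_zero_iff, ← dist_eq_norm]
    linarith [dist_triangle_right x y z, mem_ball.1 hx, mem_ball.1 hy]
  calc distPowMeasure μ s (ball z r ×ˢ ball z r)
      = ∫⁻ p in ball z r ×ˢ ball z r, g (p.1 - p.2) ∂μ.prod μ := by
        simp [distPowMeasure, withDensity_apply', g, dist_eq_norm]
    _ ≤ ∫⁻ p in (fun p : E × E => (p.1 - p.2, p.2)) ⁻¹' (ball 0 (2 * r) ×ˢ ball z r),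
          g (p.1 - p.2) ∂μ.prod μ := lintegral_mono_set hsub
    _ = ∫⁻ q in ball 0 (2 * r) ×ˢ ball z r, g q.1 ∂μ.prod μ :=
        (measurePreserving_sub_prod μ μ).setLIntegral_comp_preimage
          (measurableSet_ball.prod measurableSet_ball) (hg.comp measurable_fst)
    _ = (∫⁻ u in ball 0 (2 * r), g u ∂μ) * μ (ball z r) := by
        rw [setLIntegral_prod (fun q => g q.1) (hg.comp measurable_fst).aemeasurable]
        simp_rw [setLIntegral_const]
        rw [lintegral_mul_const _ hg]
    _ < ∞ := mul_lt_top hg_fin measure_ball_lt_top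

theorem distPowMeasure_ball_prod_pos [Nontrivial E] {s : ℝ} (hs : 0 ≤ s) (z : E) {r : ℝ}
    (hr : 0 < r) : 0 < distPowMeasure μ s (ball z r ×ˢ ball z r) := by
  have hdist : ∀ x ∈ ball z r, ∀ y ∈ ball z r, dist x y ≤ 2 * r := fun x hx y hy => by
    linarith [dist_triangle_right x y z, mem_ball.1 hx, mem_ball.1 hy]
  refine lt_of_lt_of_le ?_ (le_distPowMeasure_prod μ hs hdist)
  have hball : 0 < μ (ball z r) := measure_ball_pos μ z hr
  exact ENNReal.mul_pos (ENNReal.ofReal_pos.2 (by positivity)).ne'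
    (ENNReal.mul_pos hball.ne' hball.ne').ne'

end DistPowMeasure

theorem muMeas_eq_distPowMeasure (n : ℕ) (θ : ℝ) :
    muMeas n θ = distPowMeasure volume ((n : ℝ) - 2 * θ) := rfl

theorem EuclideanSpace.dist_le_sqrt_card_mul {ι : Type*} [Fintype ι] {x y : EuclideanSpace ℝ ι}
    {M : ℝ} (hM : 0 ≤ M) (h : ∀ i, |x i - y i| ≤ M) :
    dist x y ≤ √(Fintype.card ι) * M := by
  rw [EuclideanSpace.dist_eq, ← Real.sqrt_sq hM, ← Real.sqrt_mul (Nat.cast_nonneg _)]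
  gcongr
  calc ∑ i, dist (x i) (y i) ^ 2 ≤ ∑ _i : ι, M ^ 2 :=
        Finset.sum_le_sum fun i _ => pow_le_pow_left₀ dist_nonneg (h i) 2
    _ = Fintype.card ι * M ^ 2 := by simp

theorem setDist_comm {E : Type*} [PseudoMetricSpace E] (A B : Set E) :
    setDist A B = setDist B A := by
  unfold setDist
  congr 1
  ext d
  constructor <;> rintro ⟨x, hx, y, hy, rfl⟩ <;> exact ⟨y, hy, x, hx, dist_comm x y⟩

theorem exists_dist_lt_of_setDist_lt {E : Type*} [PseudoMetricSpace E] {A B : Set E}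
    (hA : A.Nonempty) (hB : B.Nonempty) {d : ℝ} (h : setDist A B < d) :
    ∃ x ∈ A, ∃ y ∈ B, dist x y < d := by
  obtain ⟨x, hx⟩ := hA
  obtain ⟨y, hy⟩ := hB
  have hbdd : BddBelow {d | ∃ x ∈ A, ∃ y ∈ B, d = dist x y} :=
    ⟨0, by rintro _ ⟨x, -, y, -, rfl⟩; exact dist_nonneg⟩
  obtain ⟨_, ⟨x', hx', y', hy', rfl⟩, hlt⟩ :=
    (csInf_lt_iff hbdd ⟨_, x, hx, y, hy, rfl⟩).1 h
  exact ⟨x', hx', y', hy', hlt⟩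

theorem dist_midpoint_le {E : Type*} [NormedAddCommGroup E] [NormedSpace ℝ E] {x c₁ c₂ : E}
    {ρ : ℝ} (hx : dist x c₁ ≤ ρ) : dist x (midpoint ℝ c₁ c₂) ≤ ρ + dist c₁ c₂ / 2 := by
  have := dist_triangle x c₁ (midpoint ℝ c₁ c₂)
  rw [dist_left_midpoint, Real.norm_two] at this
  linarith

section DyadicCube

variable {n k : ℕ}

noncomputable def dyadicCenter (n k : ℕ) (a : Fin n → ℕ) : EuclideanSpace ℝ (Fin n) :=
  WithLp.toLp 2 fun t => ((a t : ℝ) + 1 / 2) / 2 ^ k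

theorem dyadicCenter_mem_dyadicCube (a : Fin n → ℕ) :
    dyadicCenter n k a ∈ dyadicCube n k a := fun t => by
  simp only [dyadicCenter]
  constructor <;> gcongr <;> norm_num

theorem dist_dyadicCenter_le {a : Fin n → ℕ} {x : EuclideanSpace ℝ (Fin n)}
    (hx : x ∈ dyadicCube n k a) : dist x (dyadicCenter n k a) ≤ √n / 2 / 2 ^ k := by
  have h := EuclideanSpace.dist_le_sqrt_card_mul (x := x) (y := dyadicCenter n k a)
    (M := 1 / 2 / 2 ^ k) (by positivity) fun t => by
      obtain ⟨h₁, h₂⟩ := hx t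
      have e₁ : ((a t : ℝ) + 1 / 2) / 2 ^ k = a t / 2 ^ k + 1 / 2 / 2 ^ k := by ring
      have e₂ : ((a t : ℝ) + 1) / 2 ^ k = a t / 2 ^ k + 2 * (1 / 2 / 2 ^ k) := by ring
      rw [e₂] at h₂
      simp only [dyadicCenter, abs_sub_le_iff, e₁]
      constructor <;> linarith
  rw [Fintype.card_fin] at h
  exact h.trans_eq (by ring)

theorem volume_dyadicCube (a : Fin n → ℕ) :
    volume (dyadicCube n k a) = ENNReal.ofReal (((2 : ℝ) ^ k)⁻¹ ^ n) := by
  have hpre : dyadicCube n k a = (MeasurableEquiv.toLp 2 (Fin n → ℝ)).symm ⁻¹'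
      Set.univ.pi fun t => Set.Icc ((a t : ℝ) / 2 ^ k) (((a t : ℝ) + 1) / 2 ^ k) := by
    ext x
    simp only [dyadicCube, Set.mem_preimage, Set.mem_univ_pi, Set.mem_Icc]
    rfl
  rw [hpre, (EuclideanSpace.volume_preserving_symm_measurableEquiv_toLp (Fin n)).measure_preimage
    (MeasurableSet.univ_pi fun _ => measurableSet_Icc).nullMeasurableSet, volume_pi_pi]
  simp_rw [Real.volume_Icc, ← sub_div, add_sub_cancel_left, one_div]
  rw [Finset.prod_const, Finset.card_univ, Fintype.card_fin, ENNReal.ofReal_pow (by positivity)]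

theorem dist_dyadicCenter_lt_of_setDist_lt {a b : Fin n → ℕ} {δ : ℝ}
    (h : setDist (dyadicCube n k a) (dyadicCube n k b) < δ) :
    dist (dyadicCenter n k a) (dyadicCenter n k b) < δ + √n / 2 ^ k := by
  obtain ⟨x, hx, y, hy, hxy⟩ := exists_dist_lt_of_setDist_lt
    ⟨_, dyadicCenter_mem_dyadicCube a⟩ ⟨_, dyadicCenter_mem_dyadicCube b⟩ h
  have := dist_triangle4 (dyadicCenter n k a) x y (dyadicCenter n k b)
  rw [dist_comm _ x] at this
  have hhalf : √n / 2 / 2 ^ k + √n / 2 / 2 ^ k = √n / 2 ^ k := by ring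
  linarith [dist_dyadicCenter_le hx, dist_dyadicCenter_le hy]

theorem dyadicCube_subset_ball_midpoint {a b : Fin n → ℕ}
    (h : setDist (dyadicCube n k a) (dyadicCube n k b) < (3 * √n + 1) / 2 ^ k) :
    dyadicCube n k a ⊆
      ball (midpoint ℝ (dyadicCenter n k a) (dyadicCenter n k b)) ((5 * √n + 1) / 2 ^ k / 2) :=
  fun x hx => by
    have hx' := dist_midpoint_le (c₂ := dyadicCenter n k b) (dist_dyadicCenter_le hx)
    have hcenters := dist_dyadicCenter_lt_of_setDist_lt h
    have hradius : √n / 2 / 2 ^ k + ((3 * √n + 1) / 2 ^ k + √n / 2 ^ k) / 2 =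
        (5 * √n + 1) / 2 ^ k / 2 := by ring
    rw [mem_ball]
    linarith

theorem distPowMeasure_ball_prod_le_dyadicCube [Nontrivial (EuclideanSpace ℝ (Fin n))]
    {s : ℝ} (hs : 0 ≤ s)
    (hC : distPowMeasure volume s (ball (0 : EuclideanSpace ℝ (Fin n)) 1 ×ˢ ball 0 1) ≠ ⊤)
    {a b : Fin n → ℕ} (z : EuclideanSpace ℝ (Fin n)) {L : ℝ} (hL : 0 < L)
    (hK : ∀ x ∈ dyadicCube n k a, ∀ y ∈ dyadicCube n k b, dist x y ≤ L / 2 ^ k) :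
    distPowMeasure volume s (ball z (L / 2 ^ k) ×ˢ ball z (L / 2 ^ k)) ≤
      ENNReal.ofReal
          ((distPowMeasure volume s (ball (0 : EuclideanSpace ℝ (Fin n)) 1 ×ˢ ball 0 1)).toReal *
            L ^ (2 * n)) *
        distPowMeasure volume s (dyadicCube n k a ×ˢ dyadicCube n k b) := by
  set C := distPowMeasure volume s (ball (0 : EuclideanSpace ℝ (Fin n)) 1 ×ˢ ball 0 1)
  set r := L / 2 ^ k with hr_def
  have hr : 0 < r := by positivity
  have hlower := le_distPowMeasure_prod volume hs hK
  rw [volume_dyadicCube, volume_dyadicCube] at hlower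
  have hpow : r ^ (2 * (n : ℝ) - s) =
      L ^ (2 * n) * (r ^ (-s) * (((2 : ℝ) ^ k)⁻¹ ^ n * ((2 : ℝ) ^ k)⁻¹ ^ n)) := by
    rw [sub_eq_add_neg, Real.rpow_add hr, ← Nat.cast_ofNat, ← Nat.cast_mul, Real.rpow_natCast,
      hr_def, div_eq_mul_inv, mul_pow, ← pow_add, ← two_mul]
    ring
  rw [distPowMeasure_ball_prod volume s z hr, finrank_euclideanSpace_fin]
  calc ENNReal.ofReal (r ^ (2 * (n : ℝ) - s)) * C
      = ENNReal.ofReal (C.toReal * L ^ (2 * n)) * (ENNReal.ofReal (r ^ (-s)) *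
          (ENNReal.ofReal (((2 : ℝ) ^ k)⁻¹ ^ n) * ENNReal.ofReal (((2 : ℝ) ^ k)⁻¹ ^ n))) := by
        conv_lhs => rw [← ENNReal.ofReal_toReal hC]
        rw [hpow, ENNReal.ofReal_mul (by positivity), ENNReal.ofReal_mul (by positivity),
          ENNReal.ofReal_mul (by positivity), ENNReal.ofReal_mul ENNReal.toReal_nonneg]
        ring
    _ ≤ _ := by gcongr

end DyadicCube

/-- Near-diagonal dyadic cubes are absorbed by diagonal balls of comparable `μ`-measure:
there is `c = c(n,θ) > 0` such that for dyadic cubes `K₁, K₂ ⊂ Q₁` of sidelength `2^{-k}`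
with `dist(K₁,K₂) < (3√n + 1) 2^{-k}`, letting `z` be the midpoint of their centers and
`r = (5√n + 1) 2^{-k}`, one has `K₁ × K₂ ⊂ B_r(z) × B_r(z)` and
`μ(B_r(z) × B_r(z)) ≤ c (5√n + 1)^{2n} μ(K₁ × K₂)`. -/
theorem stmt_13 (n : ℕ) (hn : 1 ≤ n) (θ : ℝ) (hθ : θ ∈ Set.Ioo (0 : ℝ) (1 / 2)) :
    ∃ c : ℝ, 0 < c ∧
      ∀ (k : ℕ) (a b : Fin n → ℕ), (∀ t, a t < 2 ^ k) → (∀ t, b t < 2 ^ k) →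
        setDist (dyadicCube n k a) (dyadicCube n k b) < (3 * Real.sqrt n + 1) / 2 ^ k →
        ∀ z : EuclideanSpace ℝ (Fin n),
          (∀ t, z t = (((a t : ℝ) + 1 / 2) / 2 ^ k + ((b t : ℝ) + 1 / 2) / 2 ^ k) / 2) →
          dyadicCube n k a ×ˢ dyadicCube n k b ⊆
              (ball z ((5 * Real.sqrt n + 1) / 2 ^ k)) ×ˢ
                (ball z ((5 * Real.sqrt n + 1) / 2 ^ k)) ∧
            muMeas n θ
                ((ball z ((5 * Real.sqrt n + 1) / 2 ^ k)) ×ˢ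
                  (ball z ((5 * Real.sqrt n + 1) / 2 ^ k))) ≤
              ENNReal.ofReal (c * (5 * Real.sqrt n + 1) ^ (2 * n)) *
                muMeas n θ (dyadicCube n k a ×ˢ dyadicCube n k b) := by
  have hd : 1 ≤ Module.finrank ℝ (EuclideanSpace ℝ (Fin n)) := by
    rwa [finrank_euclideanSpace_fin]
  have : Nontrivial (EuclideanSpace ℝ (Fin n)) := Module.nontrivial_of_finrank_pos hd
  have hn' : (1 : ℝ) ≤ n := by exact_mod_cast hn
  have hs₀ : 0 ≤ (n : ℝ) - 2 * θ := by linarith [hθ.2]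
  have hs : (n : ℝ) - 2 * θ < Module.finrank ℝ (EuclideanSpace ℝ (Fin n)) := by
    rw [finrank_euclideanSpace_fin]
    linarith [hθ.1]
  have hC := (distPowMeasure_ball_prod_lt_top volume hd hs 0 1).ne
  refine ⟨_, ENNReal.toReal_pos (distPowMeasure_ball_prod_pos volume hs₀ 0 one_pos).ne' hC,
    fun k a b _ _ hsep z hz => ?_⟩
  have hz_mid : z = midpoint ℝ (dyadicCenter n k a) (dyadicCenter n k b) := by
    ext t
    simp only [hz, dyadicCenter, midpoint_eq_smul_add, invOf_eq_inv, smul_add, PiLp.add_apply,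
      PiLp.smul_apply, smul_eq_mul]
    ring
  have hKa : dyadicCube n k a ⊆ ball z ((5 * √n + 1) / 2 ^ k / 2) :=
    hz_mid ▸ dyadicCube_subset_ball_midpoint hsep
  have hKb : dyadicCube n k b ⊆ ball z ((5 * √n + 1) / 2 ^ k / 2) := by
    rw [setDist_comm] at hsep
    rw [hz_mid, midpoint_comm]
    exact dyadicCube_subset_ball_midpoint hsep
  have hhalf : ball z ((5 * √n + 1) / 2 ^ k / 2) ⊆ ball z ((5 * √n + 1) / 2 ^ k) :=
    ball_subset_ball (half_le_self (by positivity))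
  refine ⟨Set.prod_mono (hKa.trans hhalf) (hKb.trans hhalf), ?_⟩
  rw [muMeas_eq_distPowMeasure]
  exact distPowMeasure_ball_prod_le_dyadicCube hs₀ hC z (by positivity) fun x hx y hy => by
    linarith [dist_triangle_right x y z, mem_ball.1 (hKa hx), mem_ball.1 (hKb hy)]
end

section
/- Let F ∈ L¹_loc(ℝ^{2n}, μ) be nonnegative, and let x, y ∈ B_{r/2}(x₀) for some x₀ ∈ ℝⁿ and r > 0. Then 𝓜_{≥r}(F)(x,x) ≤ 3^{n+2θ} 𝓜(F)(x,y), where 𝓜_{≥r}(F)(x,x) = sup_{ρ ≥ r} ⨍_{𝓑_ρ(x,x)} F dμ and 𝓜(F)(x,y) = sup_{ρ>0} ⨍_{𝓑_ρ(x,y)} F dμ. -/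
/-!
Since `|x - y| < r ≤ ρ`, the triangle inequality gives
`𝓑_ρ(x,x) ⊆ 𝓑_{2ρ}(x,y) ⊆ 𝓑_{3ρ}(x,x)`. The density `|x - y|^{-(n-2θ)}` is invariant under
diagonal translations `(x, y) ↦ (x + a, y + a)` and homogeneous of degree `-(n - 2θ)`, while
Lebesgue measure on `ℝ^{2n}` scales with degree `2n`; hence
`μ(𝓑_{3ρ}(x,x)) = 3^{n+2θ} μ(𝓑_ρ(x,x))`, and the average of `F` over `𝓑_ρ(x,x)` is at most
`3^{n+2θ}` times its average over `𝓑_{2ρ}(x,y)`.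
-/

open MeasureTheory Metric ENNReal

open Set Pointwise Module

section AddHaar

variable {V : Type*} [NormedAddCommGroup V] [NormedSpace ℝ V] [FiniteDimensional ℝ V]
  [MeasurableSpace V] [BorelSpace V] (ν : Measure V) [ν.IsAddHaarMeasure]

theorem measurePreserving_smul_addHaar {c : ℝ} (hc : 0 < c) :
    MeasurePreserving (c • ·) (ENNReal.ofReal (c ^ finrank ℝ V) • ν) ν := by
  refine ⟨measurable_const_smul c, ?_⟩
  have hpos : 0 < c ^ finrank ℝ V := by positivity
  rw [Measure.map_smul, Measure.map_addHaar_smul ν hc.ne', smul_smul, abs_of_pos (inv_pos.2 hpos),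
    ← ENNReal.ofReal_mul hpos.le, mul_inv_cancel₀ hpos.ne', ENNReal.ofReal_one, one_smul]

theorem withDensity_smul_set_of_homogeneous {h : V → ℝ≥0∞} {c e : ℝ} (hc : 0 < c)
    (hhom : ∀ v, h (c • v) = ENNReal.ofReal (c ^ e) * h v) (s : Set V) :
    ν.withDensity h (c • s) = ENNReal.ofReal (c ^ (finrank ℝ V + e)) * ν.withDensity h s := by
  have hemb : MeasurableEmbedding (c • · : V → V) :=
    (Homeomorph.smulOfNeZero c hc.ne').measurableEmbedding
  rw [withDensity_apply', withDensity_apply', ← Set.image_smul,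
    ← (measurePreserving_smul_addHaar ν hc).setLIntegral_comp_emb hemb, Measure.restrict_smul,
    lintegral_smul_measure, smul_eq_mul]
  simp_rw [hhom]
  rw [lintegral_const_mul' _ _ ofReal_ne_top, ← mul_assoc, ← ENNReal.ofReal_mul (by positivity),
    Real.rpow_add hc, Real.rpow_natCast]

end AddHaar

theorem withDensity_vadd_set_of_invariant {G : Type*} [MeasurableSpace G] [AddGroup G]
    [MeasurableAdd G] (ν : Measure G) [ν.IsAddLeftInvariant] [SFinite ν] {h : G → ℝ≥0∞} {a : G}
    (hinv : ∀ v, h (a + v) = h v) (s : Set G) :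
    ν.withDensity h (a +ᵥ s) = ν.withDensity h s := by
  rw [withDensity_apply', withDensity_apply', ← Set.image_vadd]
  simpa only [hinv, vadd_eq_add] using ((measurePreserving_add_left ν a).setLIntegral_comp_emb
    (measurableEmbedding_addLeft a) h s).symm

theorem inv_mul_setLIntegral_le_of_subset {α : Type*} [MeasurableSpace α] (μ : Measure α)
    (f : α → ℝ≥0∞) {A B : Set α} {K : ℝ≥0∞} (hK : K ≠ ∞) (hAB : A ⊆ B) (hBA : μ B ≤ K * μ A) :
    (μ A)⁻¹ * ∫⁻ w in A, f w ∂μ ≤ K * ((μ B)⁻¹ * ∫⁻ w in B, f w ∂μ) := by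
  rcases eq_or_ne (μ A) 0 with hA | hA
  · -- the left side is `∞ * 0 = 0`
    simp [Measure.restrict_eq_zero.2 hA]
  have hinv : (μ A)⁻¹ ≤ K * (μ B)⁻¹ := by
    have hB : μ B ≠ 0 := (pos_of_ne_zero hA |>.trans_le (measure_mono hAB)).ne'
    rw [← div_eq_mul_inv, ENNReal.le_div_iff_mul_le (Or.inl hB) (Or.inr hK), mul_comm,
      ← div_eq_mul_inv]
    exact ENNReal.div_le_of_le_mul hBA
  calc (μ A)⁻¹ * ∫⁻ w in A, f w ∂μ ≤ K * (μ B)⁻¹ * ∫⁻ w in B, f w ∂μ :=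
        mul_le_mul' hinv (lintegral_mono_set hAB)
    _ = K * ((μ B)⁻¹ * ∫⁻ w in B, f w ∂μ) := mul_assoc _ _ _

theorem ball_prod_ball_subset_of_dist_le {X : Type*} [PseudoMetricSpace X] {x y : X} {ρ : ℝ}
    (hxy : dist x y ≤ ρ) :
    ball x ρ ×ˢ ball x ρ ⊆ ball x (2 * ρ) ×ˢ ball y (2 * ρ) ∧
      ball x (2 * ρ) ×ˢ ball y (2 * ρ) ⊆ ball x (3 * ρ) ×ˢ ball x (3 * ρ) := by
  have hρ : 0 ≤ ρ := dist_nonneg.trans hxy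
  exact ⟨prod_mono (ball_subset_ball (by linarith)) (ball_subset_ball' (by linarith)),
    prod_mono (ball_subset_ball (by linarith)) (ball_subset_ball' (by rw [dist_comm]; linarith))⟩

section DistRpowDensity

variable {E : Type*} [NormedAddCommGroup E]

theorem ofReal_dist_rpow_diag_add (e : ℝ) (a : E) (p : E × E) :
    ENNReal.ofReal (dist ((a, a) + p).1 ((a, a) + p).2 ^ e) = ENNReal.ofReal (dist p.1 p.2 ^ e) := by
  simp only [Prod.fst_add, Prod.snd_add, dist_add_left]

theorem ofReal_dist_rpow_smul [NormedSpace ℝ E] (e : ℝ) {c : ℝ} (hc : 0 < c) (p : E × E) :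
    ENNReal.ofReal (dist (c • p).1 (c • p).2 ^ e) =
      ENNReal.ofReal (c ^ e) * ENNReal.ofReal (dist p.1 p.2 ^ e) := by
  rw [Prod.smul_fst, Prod.smul_snd, dist_smul₀, Real.norm_of_nonneg hc.le,
    Real.mul_rpow hc.le dist_nonneg, ENNReal.ofReal_mul (by positivity)]

theorem withDensity_dist_rpow_ball_prod_same_smul [NormedSpace ℝ E] [FiniteDimensional ℝ E]
    [MeasurableSpace E] [BorelSpace E] (ν : Measure (E × E)) [ν.IsAddHaarMeasure] (e : ℝ) (x : E)
    {c : ℝ} (hc : 0 < c) (ρ : ℝ) :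
    ν.withDensity (fun p => ENNReal.ofReal (dist p.1 p.2 ^ e)) (ball x (c * ρ) ×ˢ ball x (c * ρ)) =
      ENNReal.ofReal (c ^ (2 * finrank ℝ E + e)) *
        ν.withDensity (fun p => ENNReal.ofReal (dist p.1 p.2 ^ e)) (ball x ρ ×ˢ ball x ρ) := by
  have hball (r : ℝ) : ball x r ×ˢ ball x r = (x, x) +ᵥ ball (0 : E × E) r := by
    rw [ball_prod_same, vadd_ball_zero]
  have hsmul : ball (0 : E × E) (c * ρ) = c • ball 0 ρ := by
    rw [_root_.smul_ball hc.ne', smul_zero, Real.norm_of_nonneg hc.le]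
  rw [hball, hball, withDensity_vadd_set_of_invariant _ (ofReal_dist_rpow_diag_add e x),
    withDensity_vadd_set_of_invariant _ (ofReal_dist_rpow_diag_add e x), hsmul,
    withDensity_smul_set_of_homogeneous _ hc (ofReal_dist_rpow_smul e hc), finrank_prod, two_mul]
  push_cast; ring_nf

end DistRpowDensity

theorem muMeas_ball_prod_same_smul (n : ℕ) (θ : ℝ) (x : EuclideanSpace ℝ (Fin n)) {c : ℝ}
    (hc : 0 < c) (ρ : ℝ) :
    muMeas n θ (ball x (c * ρ) ×ˢ ball x (c * ρ)) =
      ENNReal.ofReal (c ^ ((n : ℝ) + 2 * θ)) * muMeas n θ (ball x ρ ×ˢ ball x ρ) := by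
  have : (volume : Measure (EuclideanSpace ℝ (Fin n) × EuclideanSpace ℝ (Fin n))).IsAddHaarMeasure
    := Measure.prod.instIsAddHaarMeasure _ _
  rw [muMeas, withDensity_dist_rpow_ball_prod_same_smul _ _ x hc, finrank_euclideanSpace_fin]
  ring_nf

theorem stmt_16_general (n : ℕ) (θ : ℝ)
    (F : EuclideanSpace ℝ (Fin n) × EuclideanSpace ℝ (Fin n) → ℝ)
    (x₀ : EuclideanSpace ℝ (Fin n)) (r : ℝ)
    (x y : EuclideanSpace ℝ (Fin n)) (hx : x ∈ ball x₀ (r / 2)) (hy : y ∈ ball x₀ (r / 2)) :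
    (⨆ (ρ : ℝ) (_ : r ≤ ρ),
        (muMeas n θ ((ball x ρ) ×ˢ (ball x ρ)))⁻¹ *
          ∫⁻ w in (ball x ρ) ×ˢ (ball x ρ), ENNReal.ofReal (F w) ∂(muMeas n θ)) ≤
      ENNReal.ofReal ((3 : ℝ) ^ ((n : ℝ) + 2 * θ)) *
        ⨆ (ρ : ℝ) (_ : 0 < ρ),
          (muMeas n θ ((ball x ρ) ×ˢ (ball y ρ)))⁻¹ *
            ∫⁻ w in (ball x ρ) ×ˢ (ball y ρ), ENNReal.ofReal (F w) ∂(muMeas n θ) := by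
  refine iSup₂_le fun ρ hρ => ?_
  have hxy : dist x y < ρ := by
    have := dist_triangle_right x y x₀
    rw [mem_ball] at hx hy
    linarith
  obtain ⟨hsub, hsub'⟩ := ball_prod_ball_subset_of_dist_le hxy.le
  have hμ := (measure_mono hsub').trans (muMeas_ball_prod_same_smul n θ x three_pos ρ).le
  refine (inv_mul_setLIntegral_le_of_subset _ _ ofReal_ne_top hsub hμ).trans ?_
  gcongr
  exact le_iSup₂_of_le (2 * ρ) (by linarith [dist_nonneg.trans_lt hxy]) le_rfl

/-- For nonnegative `F ∈ L¹_loc(ℝ^{2n}, μ)` and `x, y ∈ B_{r/2}(x₀)`, the restricted diagonal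
maximal function satisfies `𝓜_{≥r}(F)(x,x) ≤ 3^{n+2θ} 𝓜(F)(x,y)`. -/
theorem stmt_16 (n : ℕ) (hn : 1 ≤ n) (θ : ℝ) (hθ : θ ∈ Set.Ioo (0 : ℝ) (1 / 2))
    (F : EuclideanSpace ℝ (Fin n) × EuclideanSpace ℝ (Fin n) → ℝ)
    (hFnn : ∀ z, 0 ≤ F z) (hF : LocallyIntegrable F (muMeas n θ))
    (x₀ : EuclideanSpace ℝ (Fin n)) (r : ℝ) (hr : 0 < r)
    (x y : EuclideanSpace ℝ (Fin n)) (hx : x ∈ ball x₀ (r / 2)) (hy : y ∈ ball x₀ (r / 2)) :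
    (⨆ (ρ : ℝ) (_ : r ≤ ρ),
        (muMeas n θ ((ball x ρ) ×ˢ (ball x ρ)))⁻¹ *
          ∫⁻ w in (ball x ρ) ×ˢ (ball x ρ), ENNReal.ofReal (F w) ∂(muMeas n θ)) ≤
      ENNReal.ofReal ((3 : ℝ) ^ ((n : ℝ) + 2 * θ)) *
        ⨆ (ρ : ℝ) (_ : 0 < ρ),
          (muMeas n θ ((ball x ρ) ×ˢ (ball y ρ)))⁻¹ *
            ∫⁻ w in (ball x ρ) ×ˢ (ball y ρ), ENNReal.ofReal (F w) ∂(muMeas n θ) :=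
  stmt_16_general n θ F x₀ r x y hx hy
end
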